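/- arXiv:1611.03236 — 3 statements merged into one kernel-verified Lean document; each statement's English description precedes it below -/
import Mathlib

section
/- Let q ∈ (0,1), let M₁, M₋₁ be as above, and for a sign pattern s ∈ {±1}^{2l} let δ_s = -1 + tr(∏_{i=1}^{l} M_{s_{2i} s_{2i+1}}). Then δ_s = (-1)^{∑_{i=1}^{l} (1 - s_{2i}s_{2i+1})/2} · (2q-1)^l. -/
/-- `M₁`. -/
noncomputable def M1 (q : ℝ) : Matrix (Fin 2) (Fin 2) ℝ :=
  (1 / q) • !![q ^ 2, (1 - q) ^ 2; q ^ 2, q ^ 2]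

/-- `M₋₁`. -/
noncomputable def Mneg1 (q : ℝ) : Matrix (Fin 2) (Fin 2) ℝ :=
  (1 / (1 - q)) • !![(1 - q) ^ 2, (1 - q) ^ 2; q ^ 2, (1 - q) ^ 2]

/-- For a sign pattern `s = (s₂,…,s_{2l+1}) ∈ {±1}^{2l}` (indexed here by `Fin (2l)`),
the product `s_{2i} s_{2i+1}` of the `i`-th consecutive pair. -/
def pairProd (l : ℕ) (s : Fin (2 * l) → ℤ) (i : Fin l) : ℤ :=
  s ⟨2 * i, by have := i.isLt; omega⟩ * s ⟨2 * i + 1, by have := i.isLt; omega⟩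

/-!
The row vector `(q, 1 - q)` is a left eigenvector, for the eigenvalue `1`, of both `M₁` and `M₋₁`.
Hence one change of basis makes all the factors lower triangular at once, with diagonals
`(1, det M₁) = (1, 2q - 1)` and `(1, det M₋₁) = (1, 1 - 2q)`. The product is then lower triangular
with diagonal `(1, ∏ ±(2q - 1))`, and its trace, a similarity invariant, is `1 + ∏ ±(2q - 1)`.
-/

theorem zpow_sum₀ {ι G₀ : Type*} [CommGroupWithZero G₀] {a : G₀} (ha : a ≠ 0)
    (s : Finset ι) (f : ι → ℤ) : a ^ (∑ i ∈ s, f i) = ∏ i ∈ s, a ^ f i := by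
  classical
  induction s using Finset.induction with
  | empty => simp
  | insert i s hi ih => rw [Finset.sum_insert hi, Finset.prod_insert hi, zpow_add₀ ha, ih]

theorem SemiconjBy.list_prod_ofFn {M : Type*} [Monoid M] {a : M} {n : ℕ} {f g : Fin n → M}
    (h : ∀ i, SemiconjBy a (f i) (g i)) :
    SemiconjBy a (List.ofFn f).prod (List.ofFn g).prod := by
  induction n with
  | zero => exact SemiconjBy.one_right a
  | succ n ih =>
    rw [List.ofFn_succ, List.ofFn_succ, List.prod_cons, List.prod_cons]
    exact (h 0).mul_right (ih fun i => h i.succ)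

namespace Matrix

theorem trace_eq_of_semiconjBy {n R : Type*} [Fintype n] [DecidableEq n] [CommRing R]
    {T A B : Matrix n n R} (hT : IsUnit T) (h : SemiconjBy T A B) : A.trace = B.trace := by
  have hA : A = T⁻¹ * B * T := by
    rw [mul_assoc, ← h.eq, nonsing_inv_mul_cancel_left _ _ ((isUnit_iff_isUnit_det T).mp hT)]
  rw [hA, trace_conj' hT]

theorem exists_list_prod_ofFn_lowerTriangular {R : Type*} [CommSemiring R] {n : ℕ}
    (c d : Fin n → R) :
    ∃ c', (List.ofFn fun i => !![1, 0; c i, d i]).prod = !![1, 0; c', ∏ i, d i] := by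
  induction n with
  | zero => exact ⟨0, by simp [one_fin_two]⟩
  | succ n ih =>
    obtain ⟨c', hc'⟩ := ih (fun i => c i.succ) (fun i => d i.succ)
    refine ⟨c 0 + d 0 * c', ?_⟩
    rw [List.ofFn_succ, List.prod_cons, hc', Fin.prod_univ_succ, mul_fin_two]
    simp

end Matrix

noncomputable def triangularizer (q : ℝ) : Matrix (Fin 2) (Fin 2) ℝ := !![q, 1 - q; 0, 1]

theorem isUnit_triangularizer {q : ℝ} (hq : q ≠ 0) : IsUnit (triangularizer q) := by
  rw [Matrix.isUnit_iff_isUnit_det, triangularizer, Matrix.det_fin_two_of]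
  simpa using hq

theorem semiconjBy_triangularizer_M1 {q : ℝ} (hq : q ≠ 0) :
    SemiconjBy (triangularizer q) (M1 q) !![1, 0; 1, 2 * q - 1] := by
  rw [SemiconjBy, triangularizer, M1, Matrix.mul_smul, Matrix.mul_fin_two, Matrix.mul_fin_two]
  ext i j
  fin_cases i <;> fin_cases j <;> simp <;> field_simp <;> ring

theorem semiconjBy_triangularizer_Mneg1 {q : ℝ} (hq : q ≠ 1) :
    SemiconjBy (triangularizer q) (Mneg1 q) !![1, 0; q / (1 - q), 1 - 2 * q] := by
  have hq' : 1 - q ≠ 0 := sub_ne_zero.mpr hq.symm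
  rw [SemiconjBy, triangularizer, Mneg1, Matrix.mul_smul, Matrix.mul_fin_two, Matrix.mul_fin_two]
  ext i j
  fin_cases i <;> fin_cases j <;> simp <;> field_simp <;> ring

theorem exists_semiconjBy_triangularizer {q : ℝ} (hq0 : q ≠ 0) (hq1 : q ≠ 1) {ε : ℤ}
    (hε : ε = 1 ∨ ε = -1) :
    ∃ c, SemiconjBy (triangularizer q) (if ε = 1 then M1 q else Mneg1 q)
      !![1, 0; c, (-1 : ℝ) ^ ((1 - ε) / 2) * (2 * q - 1)] := by
  rcases hε with rfl | rfl
  · exact ⟨1, by simpa using semiconjBy_triangularizer_M1 hq0⟩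
  · refine ⟨q / (1 - q), ?_⟩
    have hsign : (-1 : ℝ) ^ ((1 - -1 : ℤ) / 2) * (2 * q - 1) = 1 - 2 * q := by norm_num
    simpa [hsign] using semiconjBy_triangularizer_Mneg1 hq1

theorem pairProd_eq_one_or_neg_one {l : ℕ} {s : Fin (2 * l) → ℤ}
    (hs : ∀ i, s i = 1 ∨ s i = -1) (i : Fin l) : pairProd l s i = 1 ∨ pairProd l s i = -1 :=
  Int.isUnit_iff.mp ((Int.isUnit_iff.mpr (hs _)).mul (Int.isUnit_iff.mpr (hs _)))

theorem delta_formula_general (q : ℝ) (hq : q ∈ Set.Ioo (0 : ℝ) 1) (l : ℕ)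
    (s : Fin (2 * l) → ℤ) (hs : ∀ i, s i = 1 ∨ s i = -1) :
    -1 + Matrix.trace
        ((List.ofFn fun i : Fin l =>
          if pairProd l s i = 1 then M1 q else Mneg1 q).prod)
      = (-1 : ℝ) ^ (∑ i : Fin l, (1 - pairProd l s i) / 2) * (2 * q - 1) ^ l := by
  have hq0 : q ≠ 0 := hq.1.ne'
  have hq1 : q ≠ 1 := hq.2.ne
  choose c hc using fun i =>
    exists_semiconjBy_triangularizer hq0 hq1 (pairProd_eq_one_or_neg_one hs i)
  obtain ⟨c', hprod⟩ := Matrix.exists_list_prod_ofFn_lowerTriangular c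
    fun i => (-1 : ℝ) ^ ((1 - pairProd l s i) / 2) * (2 * q - 1)
  rw [Matrix.trace_eq_of_semiconjBy (isUnit_triangularizer hq0) (SemiconjBy.list_prod_ofFn hc),
    hprod, Matrix.trace_fin_two_of, Finset.prod_mul_distrib, Finset.prod_const, Finset.card_univ,
    Fintype.card_fin, zpow_sum₀ (by norm_num)]
  ring

/-- `δ_s = -1 + tr ∏_{i=1}^l M_{s_{2i}s_{2i+1}} = (-1)^{∑_i (1-s_{2i}s_{2i+1})/2} (2q-1)^l`. -/
theorem delta_formula (q : ℝ) (hq : q ∈ Set.Ioo (0 : ℝ) 1) (l : ℕ) (hl : 1 ≤ l)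
    (s : Fin (2 * l) → ℤ) (hs : ∀ i, s i = 1 ∨ s i = -1) :
    -1 + Matrix.trace
        ((List.ofFn fun i : Fin l =>
          if pairProd l s i = 1 then M1 q else Mneg1 q).prod)
      = (-1 : ℝ) ^ (∑ i : Fin l, (1 - pairProd l s i) / 2) * (2 * q - 1) ^ l :=
  delta_formula_general q hq l s hs
end

section
/- Let k ≥ 2 and let q ∈ (0,1) solve 2q = 1 - (1-q)^k. Then q = 1/2 - 2^{-1-k} + O(k/4^k) as k → ∞; i.e. there exist constants C, k₀ such that |q - 1/2 + 2^{-1-k}| ≤ C·k·4^{-k} for all k ≥ k₀. -/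
lemma pow_sub_pow_le_aux {a b : ℝ} (hb : 0 ≤ b) (hab : b ≤ a) (n : ℕ) :
    a ^ n - b ^ n ≤ n * a ^ (n - 1) * (a - b) := by
  have ha : 0 ≤ a := hb.trans hab
  rw [← geom_sum₂_mul]
  have hsum : (∑ i ∈ Finset.range n, a ^ i * b ^ (n - 1 - i)) ≤ n * a ^ (n - 1) := by
    calc (∑ i ∈ Finset.range n, a ^ i * b ^ (n - 1 - i))
        ≤ ∑ _i ∈ Finset.range n, a ^ (n - 1) := by
          refine Finset.sum_le_sum fun i hi => ?_
          have hi' : i < n := Finset.mem_range.mp hi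
          calc a ^ i * b ^ (n - 1 - i) ≤ a ^ i * a ^ (n - 1 - i) := by
                exact mul_le_mul_of_nonneg_left (pow_le_pow_left₀ hb hab _) (pow_nonneg ha _)
            _ = a ^ (n - 1) := by rw [← pow_add]; congr 1; omega
      _ = n * a ^ (n - 1) := by rw [Finset.sum_const, Finset.card_range, nsmul_eq_mul]
  exact mul_le_mul_of_nonneg_right hsum (sub_nonneg.2 hab)

/-- If `q = q(k) ∈ (0,1)` solves `2q = 1-(1-q)^k`, then
`q = 1/2 - 2^{-1-k} + O(k/4^k)` as `k → ∞`. -/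
theorem q_asymptotics :
    ∃ C : ℝ, 0 < C ∧ ∃ k₀ : ℕ, 2 ≤ k₀ ∧ ∀ k : ℕ, k₀ ≤ k → ∀ q : ℝ,
      q ∈ Set.Ioo (0 : ℝ) 1 → 2 * q = 1 - (1 - q) ^ k →
        |q - (1 / 2 - (2 : ℝ) ^ (-1 - (k : ℤ)))| ≤ C * k * (4 : ℝ) ^ (-(k : ℤ)) := by
  refine ⟨32, by norm_num, 2, le_refl 2, fun k hk q ⟨hq0, hq1⟩ heq => ?_⟩
  have hk0 : (0 : ℝ) < k := by positivity
  have hk2 : (2 : ℝ) ≤ k := by exact_mod_cast hk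
  set r : ℝ := 1 - q with hr
  have hr0 : 0 < r := by simp [hr]; linarith
  have hr1 : r < 1 := by simp [hr]; linarith
  have hrk : r ^ k = 2 * r - 1 := by
    have : (1 - q) ^ k = 1 - 2 * q := by linarith
    rw [this]; simp [hr]; ring
  have hrk_nonneg : 0 ≤ r ^ k := pow_nonneg hr0.le k
  have hr_half : 1 / 2 ≤ r := by nlinarith
  -- Bernoulli: r^k * (1 + k*q) ≤ 1
  have hbern : (1 : ℝ) + k * q ≤ (1 + q) ^ k := one_add_mul_le_pow (by linarith) k
  have hmul : r ^ k * (1 + q) ^ k ≤ 1 := by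
    rw [← mul_pow]
    have h1 : r * (1 + q) = 1 - q ^ 2 := by simp [hr]; ring
    rw [h1]
    exact pow_le_one₀ (by nlinarith) (by nlinarith)
  have hkey : r ^ k * (1 + k * q) ≤ 1 :=
    le_trans (mul_le_mul_of_nonneg_left hbern hrk_nonneg) hmul
  -- deduce r ≤ 1/2 + 1/k
  have hrub : r ≤ 1 / 2 + 1 / k := by
    rw [hrk] at hkey
    have hq : q = 1 - r := by simp [hr]
    rw [hq] at hkey
    have h2 : (k : ℝ) * (2 * r - 1) ≤ 2 := by nlinarith [hkey, hr1, hq0, hr_half]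
    have h3 : 2 * r - 1 ≤ 2 / (k : ℝ) := by
      rw [le_div_iff₀ hk0]; linarith [h2]
    have h4 : 2 / (k : ℝ) = 2 * (1 / k) := by ring
    linarith [h3]
  -- exponential bound : (1 + 2/k)^k ≤ 8
  have hexp8 : Real.exp 2 ≤ 8 := by
    have he2 : Real.exp 2 = Real.exp 1 * Real.exp 1 := by
      rw [show (2 : ℝ) = 1 + 1 by norm_num, Real.exp_add]
    nlinarith [Real.exp_one_lt_d9, Real.exp_pos 1, he2]
  have hE : (1 + 2 / (k : ℝ)) ^ k ≤ 8 := by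
    have h1 : (1 + 2 / (k : ℝ)) ≤ Real.exp (2 / k) := by
      have := Real.add_one_le_exp (2 / (k : ℝ)); linarith
    calc (1 + 2 / (k : ℝ)) ^ k ≤ Real.exp (2 / k) ^ k :=
          pow_le_pow_left₀ (by positivity) h1 k
      _ = Real.exp 2 := by
          rw [← Real.exp_nat_mul]; congr 1; field_simp
      _ ≤ 8 := hexp8
  have hbase1 : (1 : ℝ) ≤ 1 + 2 / (k : ℝ) := le_add_of_nonneg_right (by positivity)
  have hEk1 : (1 + 2 / (k : ℝ)) ^ (k - 1) ≤ 8 :=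
    le_trans (pow_le_pow_right₀ hbase1 (Nat.sub_le k 1)) hE
  -- rewrite 1/2 + 1/k
  have hhalf : (1 / 2 + 1 / (k : ℝ)) = (1 / 2) * (1 + 2 / k) := by ring
  have hpowk : r ^ k ≤ (1 / 2) ^ k * 8 := by
    calc r ^ k ≤ (1 / 2 + 1 / (k : ℝ)) ^ k := pow_le_pow_left₀ hr0.le hrub k
      _ = (1 / 2) ^ k * (1 + 2 / (k : ℝ)) ^ k := by rw [hhalf, mul_pow]
      _ ≤ (1 / 2) ^ k * 8 := by
          exact mul_le_mul_of_nonneg_left hE (by positivity)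
  have hpowk1 : r ^ (k - 1) ≤ (1 / 2) ^ (k - 1) * 8 := by
    calc r ^ (k - 1) ≤ (1 / 2 + 1 / (k : ℝ)) ^ (k - 1) := pow_le_pow_left₀ hr0.le hrub _
      _ = (1 / 2) ^ (k - 1) * (1 + 2 / (k : ℝ)) ^ (k - 1) := by rw [hhalf, mul_pow]
      _ ≤ (1 / 2) ^ (k - 1) * 8 := mul_le_mul_of_nonneg_left hEk1 (by positivity)
  have hhalfpow : ((1 : ℝ) / 2) ^ (k - 1) = 2 * (1 / 2) ^ k := by
    have h : ((1 : ℝ) / 2) ^ k = (1 / 2) ^ (k - 1) * (1 / 2) := by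
      rw [← pow_succ]; congr 1; omega
    rw [h]; ring
  -- r - 1/2 small
  have hrsub : r - 1 / 2 ≤ 4 * (1 / 2) ^ k := by
    have : r - 1 / 2 = r ^ k / 2 := by rw [hrk]; ring
    rw [this]; linarith
  -- main estimate
  have hmain : r ^ k - (1 / 2) ^ k ≤ 64 * k * (1 / 4) ^ k := by
    calc r ^ k - (1 / 2) ^ k ≤ k * r ^ (k - 1) * (r - 1 / 2) :=
          pow_sub_pow_le_aux (by norm_num) hr_half k
      _ ≤ k * ((1 / 2) ^ (k - 1) * 8) * (4 * (1 / 2) ^ k) := by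
          have h1 : 0 ≤ r - 1 / 2 := by linarith
          have h2 : (k : ℝ) * r ^ (k - 1) ≤ k * ((1 / 2) ^ (k - 1) * 8) :=
            mul_le_mul_of_nonneg_left hpowk1 hk0.le
          exact mul_le_mul h2 hrsub h1 (by positivity)
      _ = 64 * k * (1 / 4) ^ k := by
          rw [hhalfpow]
          have : ((1 : ℝ) / 4) ^ k = (1 / 2) ^ k * (1 / 2) ^ k := by
            rw [← mul_pow]; norm_num
          rw [this]; ring
  have hlow : (1 / 2 : ℝ) ^ k ≤ r ^ k := pow_le_pow_left₀ (by norm_num) hr_half k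
  -- rewrite the goal
  have hz1 : (2 : ℝ) ^ (-1 - (k : ℤ)) = (1 / 2 : ℝ) ^ k / 2 := by
    rw [show (-1 - (k : ℤ)) = -(((k + 1 : ℕ) : ℤ)) by push_cast; ring, zpow_neg, zpow_natCast]
    rw [pow_succ, mul_inv, one_div, inv_pow]
    ring
  have hz2 : (4 : ℝ) ^ (-(k : ℤ)) = (1 / 4 : ℝ) ^ k := by
    rw [zpow_neg, zpow_natCast, one_div, inv_pow]
  rw [hz1, hz2]
  have hqval : q - (1 / 2 - (1 / 2 : ℝ) ^ k / 2) = ((1 / 2) ^ k - r ^ k) / 2 := by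
    have : q = 1 / 2 - r ^ k / 2 := by rw [hrk]; simp [hr]; ring
    rw [this]; ring
  rw [hqval, abs_div, abs_of_nonneg (by norm_num : (0:ℝ) ≤ 2), abs_of_nonpos (by linarith)]
  have : -((1 / 2 : ℝ) ^ k - r ^ k) / 2 = (r ^ k - (1 / 2) ^ k) / 2 := by ring
  rw [this]
  linarith
end

section
/- With notation as above, ∑_{σ,τ∈Σ} μ̄(σ)μ̄(τ)·ζ(σ,τ)² = (k/4)·((k-1)q² + 1), where ζ(σ,τ) = #{j : σ_j = τ_j = 1}. -/
/-- `±1` encoded by a Boolean. -/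
noncomputable def sgnR (b : Bool) : ℝ := if b then 1 else -1

/-- `Σ = {±1}^k \ {(-1,…,-1)}`, with `{±1}^k` encoded as `Fin k → Bool`
(`true ↦ 1`, `false ↦ -1`). -/
def Sig (k : ℕ) : Finset (Fin k → Bool) :=
  Finset.univ.filter fun σ => σ ≠ fun _ => false

/-- `μ̄(σ) = (q(1-q))^{k/2}/(1-(1-q)^k) · (q/(1-q))^{(1/2)∑_j σ_j}`. -/
noncomputable def mubar (k : ℕ) (q : ℝ) (σ : Fin k → Bool) : ℝ :=
  (q * (1 - q)) ^ ((k : ℝ) / 2) / (1 - (1 - q) ^ k) *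
    (q / (1 - q)) ^ ((∑ j : Fin k, sgnR (σ j)) / 2)

/-- `ζ(σ,τ) = #{j : σ_j = τ_j = 1}`. -/
def zeta (k : ℕ) (σ τ : Fin k → Bool) : ℕ :=
  (Finset.univ.filter fun j : Fin k => σ j = true ∧ τ j = true).card


noncomputable def wB (q : ℝ) : Bool → ℝ := fun b => if b then q else 1 - q

def cnt (k : ℕ) (σ : Fin k → Bool) : ℕ :=
  (Finset.univ.filter fun j => σ j = true).card

lemma cnt_le (k : ℕ) (σ : Fin k → Bool) : cnt k σ ≤ k := by
  classical
  simpa [cnt] using Finset.card_filter_le (Finset.univ : Finset (Fin k)) _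

lemma sum_sgnR (k : ℕ) (σ : Fin k → Bool) :
    ∑ j, sgnR (σ j) = 2 * (cnt k σ : ℝ) - k := by
  classical
  have hb : ∀ b : Bool, sgnR b = 2 * (if b = true then (1:ℝ) else 0) - 1 := by
    intro b; cases b <;> simp [sgnR] <;> norm_num
  simp_rw [hb]
  rw [Finset.sum_sub_distrib, ← Finset.mul_sum, Finset.sum_boole]
  simp [cnt]

lemma prod_wB (k : ℕ) (q : ℝ) (σ : Fin k → Bool) :
    ∏ l, wB q (σ l) = q ^ cnt k σ * (1 - q) ^ (k - cnt k σ) := by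
  classical
  unfold wB
  rw [Finset.prod_ite, Finset.prod_const, Finset.prod_const]
  have hcard := Finset.card_filter_add_card_filter_not
    (s := (Finset.univ : Finset (Fin k))) (p := fun j => σ j = true)
  simp only [Finset.card_univ, Fintype.card_fin] at hcard
  have : (Finset.univ.filter fun j => ¬ (σ j = true)).card = k - cnt k σ := by
    unfold cnt; omega
  rw [this]; rfl

lemma mubar_eq (k : ℕ) (q : ℝ) (hq0 : 0 < q) (hq1 : q < 1) (σ : Fin k → Bool) :
    mubar k q σ = (∏ l, wB q (σ l)) / (1 - (1 - q) ^ k) := by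
  have hb : (0:ℝ) < 1 - q := by linarith
  unfold mubar
  rw [sum_sgnR, prod_wB]
  rw [div_mul_eq_mul_div]
  congr 1
  have he : (2 * (cnt k σ : ℝ) - k) / 2 = (cnt k σ : ℝ) - (k:ℝ)/2 := by ring
  rw [he, Real.mul_rpow hq0.le hb.le, Real.div_rpow hq0.le hb.le]
  have : q ^ ((k:ℝ)/2) * (1-q) ^ ((k:ℝ)/2) *
      (q ^ ((cnt k σ:ℝ) - (k:ℝ)/2) / (1-q) ^ ((cnt k σ:ℝ) - (k:ℝ)/2))
      = (q ^ ((k:ℝ)/2) * q ^ ((cnt k σ:ℝ) - (k:ℝ)/2)) *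
        ((1-q) ^ ((k:ℝ)/2) / (1-q) ^ ((cnt k σ:ℝ) - (k:ℝ)/2)) := by ring
  rw [this, ← Real.rpow_add hq0, ← Real.rpow_sub hb]
  have h1 : (k:ℝ)/2 + ((cnt k σ:ℝ) - (k:ℝ)/2) = (cnt k σ : ℝ) := by ring
  have h2 : (k:ℝ)/2 - ((cnt k σ:ℝ) - (k:ℝ)/2) = ((k - cnt k σ : ℕ) : ℝ) := by
    rw [Nat.cast_sub (cnt_le k σ)]; ring
  rw [h1, h2, Real.rpow_natCast, Real.rpow_natCast]


lemma sum_prod_bool (k : ℕ) (F : Fin k → Bool → ℝ) :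
    ∑ σ : Fin k → Bool, ∏ l, F l (σ l) = ∏ l, (F l true + F l false) := by
  classical
  have : ∀ l : Fin k, F l true + F l false = ∑ b : Bool, F l b := by
    intro l; simp [Fintype.sum_bool]
  simp_rw [this]
  rw [Finset.prod_univ_sum]
  rw [Fintype.piFinset_univ]

lemma S1 (k : ℕ) (q : ℝ) (i j : Fin k) :
    ∑ σ : Fin k → Bool, (∏ l, wB q (σ l)) * (if σ i = true then (1:ℝ) else 0) *
      (if σ j = true then (1:ℝ) else 0)
    = if i = j then q else q ^ 2 := by
  classical
  have h1 : ∀ σ : Fin k → Bool,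
      (∏ l, wB q (σ l)) * (if σ i = true then (1:ℝ) else 0) *
        (if σ j = true then (1:ℝ) else 0)
      = ∏ l, (wB q (σ l) * (if l = i then (if σ l = true then (1:ℝ) else 0) else 1)
          * (if l = j then (if σ l = true then (1:ℝ) else 0) else 1)) := by
    intro σ
    rw [Finset.prod_mul_distrib, Finset.prod_mul_distrib,
      Finset.prod_ite_eq' Finset.univ i (fun l => if σ l = true then (1:ℝ) else 0),
      Finset.prod_ite_eq' Finset.univ j (fun l => if σ l = true then (1:ℝ) else 0)]
    simp
  simp_rw [h1]
  rw [sum_prod_bool k (fun l b => (wB q b * if l = i then (if b = true then (1:ℝ) else 0) else 1)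
      * (if l = j then (if b = true then (1:ℝ) else 0) else 1))]
  simp only []
  have h2 : ∀ l : Fin k,
      (wB q true * (if l = i then (if True then (1:ℝ) else 0) else 1)
        * (if l = j then (if True then (1:ℝ) else 0) else 1))
      + (wB q false * (if l = i then (if (false:Bool) = true then (1:ℝ) else 0) else 1)
        * (if l = j then (if (false:Bool) = true then (1:ℝ) else 0) else 1))
      = if l ∈ ({i, j} : Finset (Fin k)) then q else 1 := by
    intro l
    by_cases hi : l = i <;> by_cases hj : l = j <;> simp [hi, hj, wB]
  rw [Finset.prod_congr rfl fun l _ => h2 l, Finset.prod_ite_mem, Finset.univ_inter,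
    Finset.prod_const]
  by_cases hij : i = j
  · simp [hij]
  · rw [Finset.card_pair hij]; simp [hij]

/-- `∑_{σ,τ∈Σ} μ̄(σ)μ̄(τ)ζ(σ,τ)² = (k/4)((k-1)q²+1)`. -/
theorem zeta_second_moment (k : ℕ) (hk : 2 ≤ k) (q : ℝ) (hq : q ∈ Set.Ioo (0 : ℝ) 1)
    (h : 2 * q = 1 - (1 - q) ^ k) :
    ∑ σ ∈ Sig k, ∑ τ ∈ Sig k, mubar k q σ * mubar k q τ * (zeta k σ τ : ℝ) ^ 2
      = ((k : ℝ) / 4) * (((k : ℝ) - 1) * q ^ 2 + 1) := by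
  classical
  obtain ⟨hq0, hq1⟩ := hq
  have hqne : q ≠ 0 := ne_of_gt hq0
  have hzeta : ∀ σ τ : Fin k → Bool, (zeta k σ τ : ℝ)
      = ∑ i : Fin k, (if σ i = true then (1:ℝ) else 0) * (if τ i = true then (1:ℝ) else 0) := by
    intro σ τ
    rw [zeta, Finset.card_filter]
    push_cast
    apply Finset.sum_congr rfl
    intro i _
    by_cases h1 : σ i = true <;> by_cases h2 : τ i = true <;> simp [h1, h2]
  have hext : ∀ G : (Fin k → Bool) → ℝ, G (fun _ => false) = 0 →
      ∑ σ ∈ Sig k, G σ = ∑ σ : Fin k → Bool, G σ := by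
    intro G hG
    rw [Sig, Finset.sum_filter]
    apply Finset.sum_congr rfl
    intro σ _
    by_cases hσ : σ = fun _ => false
    · simp [hσ, hG]
    · simp [hσ]
  have hz0 : ∀ τ : Fin k → Bool, (zeta k (fun _ => false) τ : ℝ) = 0 := by
    intro τ; simp [zeta]
  have hz0' : ∀ σ : Fin k → Bool, (zeta k σ (fun _ => false) : ℝ) = 0 := by
    intro σ; simp [zeta]
  rw [hext _ (by
    apply Finset.sum_eq_zero
    intro τ _
    rw [hz0]
    ring)]
  have hinner : ∀ σ : Fin k → Bool,
      ∑ τ ∈ Sig k, mubar k q σ * mubar k q τ * (zeta k σ τ : ℝ) ^ 2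
      = ∑ τ : Fin k → Bool, mubar k q σ * mubar k q τ * (zeta k σ τ : ℝ) ^ 2 := by
    intro σ
    apply hext
    rw [hz0']
    ring
  simp_rw [hinner]
  have hmu : ∀ σ : Fin k → Bool, mubar k q σ = (∏ l, wB q (σ l)) / (2 * q) := by
    intro σ
    rw [mubar_eq k q hq0 hq1, ← h]
  have hterm : ∀ σ τ : Fin k → Bool,
      mubar k q σ * mubar k q τ * (zeta k σ τ : ℝ) ^ 2
      = (1 / (4 * q ^ 2)) *
        ((∏ l, wB q (σ l)) * (∏ l, wB q (τ l)) * (zeta k σ τ : ℝ) ^ 2) := by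
    intro σ τ
    have h4 : (2*q)*(2*q) = 4*q^2 := by ring
    rw [hmu, hmu, div_mul_div_comm, h4, div_mul_eq_mul_div, one_div_mul_eq_div]
  simp_rw [hterm, ← Finset.mul_sum]
  have key : ∑ σ : Fin k → Bool, ∑ τ : Fin k → Bool,
      (∏ l, wB q (σ l)) * (∏ l, wB q (τ l)) * (zeta k σ τ : ℝ) ^ 2
      = (k : ℝ) * q ^ 2 + (k : ℝ) * ((k : ℝ) - 1) * q ^ 4 := by
    set X : (Fin k → Bool) → Fin k → Fin k → ℝ :=
      fun σ i j => (∏ l, wB q (σ l)) * (if σ i = true then (1:ℝ) else 0) *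
        (if σ j = true then (1:ℝ) else 0) with hX
    have expand : ∀ σ τ : Fin k → Bool,
        (∏ l, wB q (σ l)) * (∏ l, wB q (τ l)) * (zeta k σ τ : ℝ) ^ 2
        = ∑ i : Fin k, ∑ j : Fin k, X σ i j * X τ i j := by
      intro σ τ
      rw [hzeta, sq, Finset.sum_mul_sum, Finset.mul_sum]
      apply Finset.sum_congr rfl
      intro i _
      rw [Finset.mul_sum]
      apply Finset.sum_congr rfl
      intro j _
      simp only [hX]
      ring
    simp_rw [expand]
    calc ∑ σ : Fin k → Bool, ∑ τ : Fin k → Bool, ∑ i : Fin k, ∑ j : Fin k, X σ i j * X τ i j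
        = ∑ σ : Fin k → Bool, ∑ i : Fin k, ∑ τ : Fin k → Bool, ∑ j : Fin k, X σ i j * X τ i j :=
          Finset.sum_congr rfl fun σ _ => Finset.sum_comm
      _ = ∑ σ : Fin k → Bool, ∑ i : Fin k, ∑ j : Fin k, ∑ τ : Fin k → Bool, X σ i j * X τ i j :=
          Finset.sum_congr rfl fun σ _ => Finset.sum_congr rfl fun i _ => Finset.sum_comm
      _ = ∑ i : Fin k, ∑ σ : Fin k → Bool, ∑ j : Fin k, ∑ τ : Fin k → Bool, X σ i j * X τ i j :=
          Finset.sum_comm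
      _ = ∑ i : Fin k, ∑ j : Fin k, ∑ σ : Fin k → Bool, ∑ τ : Fin k → Bool, X σ i j * X τ i j :=
          Finset.sum_congr rfl fun i _ => Finset.sum_comm
      _ = ∑ i : Fin k, ∑ j : Fin k, (∑ σ : Fin k → Bool, X σ i j) * (∑ τ : Fin k → Bool, X τ i j) := by
          refine Finset.sum_congr rfl fun i _ => Finset.sum_congr rfl fun j _ => ?_
          rw [Finset.sum_mul_sum]
      _ = ∑ i : Fin k, ∑ j : Fin k, ((if i = j then q else q ^ 2) * (if i = j then q else q ^ 2)) := by
          refine Finset.sum_congr rfl fun i _ => Finset.sum_congr rfl fun j _ => ?_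
          rw [hX, S1 k q i j]
      _ = ∑ i : Fin k, ∑ j : Fin k, (q ^ 4 + if i = j then q ^ 2 - q ^ 4 else 0) := by
          refine Finset.sum_congr rfl fun i _ => Finset.sum_congr rfl fun j _ => ?_
          by_cases hij : i = j <;> simp [hij] <;> ring
      _ = (k : ℝ) * q ^ 2 + (k : ℝ) * ((k : ℝ) - 1) * q ^ 4 := by
          simp [Finset.sum_add_distrib, Finset.sum_const, Finset.card_univ,
            nsmul_eq_mul, Finset.sum_ite_eq]
          ring
  rw [key]
  field_simp
  ring
end
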